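/- arXiv:2005.02340 — 3 statements merged into one kernel-verified Lean document; each statement's English description precedes it below -/
import Mathlib

section
/- Let E₂(τ) = 1 - 24∑_{n≥1} σ₁(n)qⁿ and E₄(τ) = 1 + 240∑_{n≥1} σ₃(n)qⁿ with q = exp(2πiτ), τ in the upper half-plane. Assuming the Ramanujan identity (1/(2πi))·dE₂/dτ = (E₂² - E₄)/12, the function f₆(τ) = ∫_i^τ η(z)⁴ dz, where η is the Dedekind eta function (so that E₂ = (12/(πi))·η'/η), satisfies the Schwarzian equation {f₆, τ} = (2π²/36)·E₄(τ). -/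
/-!
Writing `L = f''/f'` for the logarithmic derivative of `f'`, the Schwarzian is `L' - L²/2`.
For `f₆' = η⁴` this gives `L = 4 η'/η = (πi/3) E₂`, so `{f₆, τ} = (πi/3) E₂' + (π²/18) E₂²`,
and Ramanujan's identity `E₂' = (πi/6)(E₂² - E₄)` cancels the `E₂²` terms, leaving `(π²/18) E₄`.
-/

open Complex Filter Topology

noncomputable def schwarzian (f : ℂ → ℂ) (z : ℂ) : ℂ :=
  deriv (deriv (deriv f)) z / deriv f z - 3 / 2 * (deriv (deriv f) z / deriv f z) ^ 2

/-- The Dedekind eta function `η(τ) = q^{1/24} ∏_{n≥1} (1 - qⁿ)`, `q = exp(2πiτ)`. -/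
noncomputable def dedekindEta (τ : ℂ) : ℂ :=
  Complex.exp (Real.pi * Complex.I * τ / 12) *
    ∏' n : ℕ, (1 - Complex.exp (2 * Real.pi * Complex.I * τ) ^ (n + 1))

/-- The weight 2 Eisenstein series `E₂(τ) = 1 - 24 ∑_{n≥1} σ₁(n) qⁿ`. -/
noncomputable def Eis₂ (τ : ℂ) : ℂ :=
  1 - 24 * ∑' n : ℕ, (ArithmeticFunction.sigma 1 (n + 1) : ℂ) *
    Complex.exp (2 * Real.pi * Complex.I * τ) ^ (n + 1)

/-- The weight 4 Eisenstein series `E₄(τ) = 1 + 240 ∑_{n≥1} σ₃(n) qⁿ`. -/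
noncomputable def Eis₄ (τ : ℂ) : ℂ :=
  1 + 240 * ∑' n : ℕ, (ArithmeticFunction.sigma 3 (n + 1) : ℂ) *
    Complex.exp (2 * Real.pi * Complex.I * τ) ^ (n + 1)

theorem schwarzian_eq_deriv_logDeriv_deriv {f : ℂ → ℂ} {z : ℂ} (hf : AnalyticAt ℂ (deriv f) z)
    (hz : deriv f z ≠ 0) :
    schwarzian f z = deriv (logDeriv (deriv f)) z - 1 / 2 * logDeriv (deriv f) z ^ 2 := by
  have hL : HasDerivAt (logDeriv (deriv f))
      ((deriv (deriv (deriv f)) z * deriv f z - deriv (deriv f) z * deriv (deriv f) z) /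
        deriv f z ^ 2) z :=
    hf.deriv.differentiableAt.hasDerivAt.div hf.differentiableAt.hasDerivAt hz
  rw [schwarzian, hL.deriv, logDeriv_apply]
  field_simp
  ring

theorem stmt_5_general (Ω : Set ℂ) (hΩ : Ω = {z : ℂ | 0 < z.im})
    (hη : AnalyticOn ℂ dedekindEta Ω)
    (hηne : ∀ τ ∈ Ω, dedekindEta τ ≠ 0)
    (hE₂eta : ∀ τ ∈ Ω, Eis₂ τ =
      12 / (Real.pi * Complex.I) * (deriv dedekindEta τ / dedekindEta τ))
    (hRamanujan : ∀ τ ∈ Ω,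
      1 / (2 * Real.pi * Complex.I) * deriv Eis₂ τ = (Eis₂ τ ^ 2 - Eis₄ τ) / 12)
    (f₆ : ℂ → ℂ)
    (hf₆' : ∀ τ ∈ Ω, deriv f₆ τ = dedekindEta τ ^ 4) :
    ∀ τ ∈ Ω, schwarzian f₆ τ = 2 * Real.pi ^ 2 / 36 * Eis₄ τ := by
  have hΩo : IsOpen Ω := hΩ ▸ isOpen_lt continuous_const continuous_im
  have hηa : AnalyticOnNhd ℂ dedekindEta Ω := hΩo.analyticOn_iff_analyticOnNhd.mp hη
  have hf₆'_nhds {τ} (hτ : τ ∈ Ω) : deriv f₆ =ᶠ[𝓝 τ] (dedekindEta · ^ 4) :=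
    eventuallyEq_of_mem (hΩo.mem_nhds hτ) hf₆'
  have hlog : ∀ τ ∈ Ω, logDeriv (deriv f₆) τ = Real.pi * I / 3 * Eis₂ τ := by
    intro τ hτ
    rw [(logDeriv_congr_nhds (hf₆'_nhds hτ)).eq_of_nhds,
      logDeriv_fun_pow (hηa τ hτ).differentiableAt, logDeriv_apply, hE₂eta τ hτ]
    field_simp
    ring
  intro τ hτ
  have hR := hRamanujan τ hτ
  rw [schwarzian_eq_deriv_logDeriv_deriv ((hηa τ hτ).pow 4 |>.congr (hf₆'_nhds hτ).symm)
      (hf₆' τ hτ ▸ pow_ne_zero 4 (hηne τ hτ)),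
    (eventuallyEq_of_mem (hΩo.mem_nhds hτ) hlog).deriv_eq, deriv_const_mul_field, hlog τ hτ]
  field_simp at hR
  linear_combination (Real.pi * I / 36) * hR + (-Real.pi ^ 2 / 18 * Eis₄ τ) * I_sq

theorem stmt_5 (Ω : Set ℂ) (hΩ : Ω = {z : ℂ | 0 < z.im})
    (hη : AnalyticOn ℂ dedekindEta Ω)
    (hηne : ∀ τ ∈ Ω, dedekindEta τ ≠ 0)
    (hE₂eta : ∀ τ ∈ Ω, Eis₂ τ =
      12 / (Real.pi * Complex.I) * (deriv dedekindEta τ / dedekindEta τ))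
    (hRamanujan : ∀ τ ∈ Ω,
      1 / (2 * Real.pi * Complex.I) * deriv Eis₂ τ = (Eis₂ τ ^ 2 - Eis₄ τ) / 12)
    (f₆ : ℂ → ℂ) (hf₆ : AnalyticOn ℂ f₆ Ω)
    (hf₆' : ∀ τ ∈ Ω, deriv f₆ τ = dedekindEta τ ^ 4) :
    ∀ τ ∈ Ω, schwarzian f₆ τ = 2 * Real.pi ^ 2 / 36 * Eis₄ τ :=
  stmt_5_general Ω hΩ hη hηne hE₂eta hRamanujan f₆ hf₆'
end

section
/- Fix n ≥ 1 and a, b, c > 0, and let U = {x ∈ ℝⁿ : 0 < x₁ < ... < xₙ < 1} with fᵢ(x) = a/(1-xᵢ) - b/xᵢ - ∑_{j≠i} c/(xᵢ-xⱼ). For every boundary point v ∈ ∂U and every sequence (uₖ) in U converging to v, there exists an index i ∈ {1,...,n} such that |fᵢ(uₖ)| → ∞ as k → ∞. -/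
/-!
On `U` the force splits as
`fᵢ(x) = a/(1-xᵢ) - b/xᵢ - ∑_{j<i} c/(xᵢ-xⱼ) + ∑_{j>i} c/(xⱼ-xᵢ)` with both sums nonnegative.
Take `i` the largest index with `vᵢ = 0`, or else the smallest with `vᵢ = 1`, or else the smallest
index whose value is repeated in `v` (some value is, since `v` is monotone but not in `U`). Then
one term of `fᵢ(uₖ)` has a vanishing denominator and a definite sign (`-b/xᵢ`, `a/(1-xᵢ)`,
resp. `c/(x_{i'}-xᵢ)`); the terms of opposite sign are dropped using the nonnegative sums, and the
choice of `i` keeps the denominators of all remaining terms away from zero, so they converge.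
-/

open Finset Filter Topology

section Force

variable {n : ℕ} (a b c : ℝ)

noncomputable def force (x : Fin n → ℝ) (i : Fin n) : ℝ :=
  a / (1 - x i) - b / x i - ∑ j ∈ univ.erase i, c / (x i - x j)

variable {a b c}

lemma force_eq_sub_add (x : Fin n → ℝ) (i : Fin n) :
    force a b c x i = a / (1 - x i) - b / x i - ∑ j ∈ Iio i, c / (x i - x j)
      + ∑ j ∈ Ioi i, c / (x j - x i) := by
  have h_lt : (univ.erase i).filter (· < i) = Iio i := by
    ext j; simp only [mem_filter, mem_erase, mem_univ, mem_Iio]; grind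
  have h_gt : (univ.erase i).filter (¬ · < i) = Ioi i := by
    ext j; simp only [mem_filter, mem_erase, mem_univ, mem_Ioi]; grind
  have h_neg : ∑ j ∈ Ioi i, c / (x i - x j) = -∑ j ∈ Ioi i, c / (x j - x i) := by
    rw [← sum_neg_distrib]; exact sum_congr rfl fun j _ => by rw [← div_neg, neg_sub]
  rw [force, ← sum_filter_add_sum_filter_not _ (· < i), h_lt, h_gt, h_neg]
  ring

variable {x : Fin n → ℝ}

lemma force_le (hx : StrictMono x) (hc : 0 ≤ c) (i : Fin n) :
    force a b c x i ≤ a / (1 - x i) - b / x i + ∑ j ∈ Ioi i, c / (x j - x i) := by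
  have : 0 ≤ ∑ j ∈ Iio i, c / (x i - x j) :=
    sum_nonneg fun j hj => div_nonneg hc (sub_nonneg.2 (hx (mem_Iio.1 hj)).le)
  rw [force_eq_sub_add]
  linarith

lemma le_force (hx : StrictMono x) (hc : 0 ≤ c) (i : Fin n) :
    a / (1 - x i) - b / x i - ∑ j ∈ Iio i, c / (x i - x j) ≤ force a b c x i := by
  have : 0 ≤ ∑ j ∈ Ioi i, c / (x j - x i) :=
    sum_nonneg fun j hj => div_nonneg hc (sub_nonneg.2 (hx (mem_Ioi.1 hj)).le)
  rw [force_eq_sub_add]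
  linarith

lemma le_force_of_lt (hx : StrictMono x) (hc : 0 ≤ c) {i i' : Fin n} (hii' : i < i') :
    a / (1 - x i) - b / x i - ∑ j ∈ Iio i, c / (x i - x j) + c / (x i' - x i) ≤
      force a b c x i := by
  have : c / (x i' - x i) ≤ ∑ j ∈ Ioi i, c / (x j - x i) :=
    single_le_sum (f := fun j => c / (x j - x i))
      (fun j hj => div_nonneg hc (sub_nonneg.2 (hx (mem_Ioi.1 hj)).le)) (mem_Ioi.2 hii')
  rw [force_eq_sub_add]
  linarith

end Force

lemma tendsto_const_div_atTop_of_tendsto_zero {α : Type*} {l : Filter α} {g : α → ℝ} {r : ℝ}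
    (hr : 0 < r) (hg : ∀ᶠ k in l, 0 < g k) (h0 : Tendsto g l (𝓝 0)) :
    Tendsto (fun k => r / g k) l atTop := by
  simpa only [div_eq_mul_inv, Pi.inv_apply] using
    (tendsto_nhdsWithin_iff.2 ⟨h0, hg⟩).inv_tendsto_nhdsGT_zero.const_mul_atTop hr

section Limits

variable {α : Type*} {l : Filter α} {n : ℕ} {a b c : ℝ} {u : α → Fin n → ℝ} {v : Fin n → ℝ}
  {i : Fin n}

lemma tendsto_force_atBot_of_maximal_zero (hb : 0 < b) (hc : 0 ≤ c) (hpos : ∀ k j, 0 < u k j)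
    (hu : ∀ k, StrictMono (u k)) (hlim : Tendsto u l (𝓝 v)) (hi : Maximal (v · = 0) i) :
    Tendsto (fun k => force a b c (u k) i) l atBot := by
  have hcoord := tendsto_pi_nhds.1 hlim
  have h_reg : Tendsto (fun k => a / (1 - u k i) + ∑ j ∈ Ioi i, c / (u k j - u k i)) l
      (𝓝 (a / (1 - v i) + ∑ j ∈ Ioi i, c / (v j - v i))) :=
    (tendsto_const_nhds.div (tendsto_const_nhds.sub (hcoord i)) (by simp [hi.1])).add <|
      tendsto_finsetSum _ fun j hj => tendsto_const_nhds.div ((hcoord j).sub (hcoord i)) <|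
        sub_ne_zero.2 fun h => hi.not_gt (h.trans hi.1) (mem_Ioi.1 hj)
  have h_pole : Tendsto (fun k => -(b / u k i)) l atBot := tendsto_neg_atTop_atBot.comp <|
    tendsto_const_div_atTop_of_tendsto_zero hb (.of_forall fun k => hpos k i) (hi.1 ▸ hcoord i)
  exact tendsto_atBot_mono (fun k => (force_le (hu k) hc i).trans_eq (by ring))
    (h_reg.add_atBot h_pole)

lemma tendsto_force_atTop_of_minimal_one (ha : 0 < a) (hc : 0 ≤ c) (hlt : ∀ k j, u k j < 1)
    (hu : ∀ k, StrictMono (u k)) (hlim : Tendsto u l (𝓝 v)) (hi : Minimal (v · = 1) i) :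
    Tendsto (fun k => force a b c (u k) i) l atTop := by
  have hcoord := tendsto_pi_nhds.1 hlim
  have h_reg : Tendsto (fun k => -(b / u k i) - ∑ j ∈ Iio i, c / (u k i - u k j)) l
      (𝓝 (-(b / v i) - ∑ j ∈ Iio i, c / (v i - v j))) :=
    (tendsto_const_nhds.div (hcoord i) (by simp [hi.1])).neg.sub <|
      tendsto_finsetSum _ fun j hj => tendsto_const_nhds.div ((hcoord i).sub (hcoord j)) <|
        sub_ne_zero.2 fun h => hi.not_lt (h.symm.trans hi.1) (mem_Iio.1 hj)
  have h_pole : Tendsto (fun k => a / (1 - u k i)) l atTop :=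
    tendsto_const_div_atTop_of_tendsto_zero ha (.of_forall fun k => sub_pos.2 (hlt k i))
      (by simpa [hi.1] using (tendsto_const_nhds (x := (1 : ℝ))).sub (hcoord i))
  exact tendsto_atTop_mono (fun k => (le_force (hu k) hc i).trans_eq' (by ring))
    (h_reg.add_atTop h_pole)

lemma tendsto_force_atTop_of_collision (hc : 0 < c) (hu : ∀ k, StrictMono (u k))
    (hlim : Tendsto u l (𝓝 v)) (h0 : v i ≠ 0) (h1 : v i ≠ 1) {i' : Fin n} (hii' : i < i')
    (heq : v i' = v i) (hlt : ∀ j < i, v j ≠ v i) :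
    Tendsto (fun k => force a b c (u k) i) l atTop := by
  have hcoord := tendsto_pi_nhds.1 hlim
  have h_reg : Tendsto (fun k => a / (1 - u k i) - b / u k i - ∑ j ∈ Iio i, c / (u k i - u k j))
      l (𝓝 (a / (1 - v i) - b / v i - ∑ j ∈ Iio i, c / (v i - v j))) :=
    ((tendsto_const_nhds.div (tendsto_const_nhds.sub (hcoord i)) (sub_ne_zero.2 h1.symm)).sub
      (tendsto_const_nhds.div (hcoord i) h0)).sub <|
      tendsto_finsetSum _ fun j hj => tendsto_const_nhds.div ((hcoord i).sub (hcoord j)) <|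
        sub_ne_zero.2 fun h => hlt j (mem_Iio.1 hj) h.symm
  have h_pole : Tendsto (fun k => c / (u k i' - u k i)) l atTop :=
    tendsto_const_div_atTop_of_tendsto_zero hc (.of_forall fun k => sub_pos.2 (hu k hii'))
      (by simpa [heq] using (hcoord i').sub (hcoord i))
  exact tendsto_atTop_mono (fun k => le_force_of_lt (hu k) hc.le hii') (h_reg.add_atTop h_pole)

end Limits

lemma exists_lt_eq_forall_lt_ne {ι β : Type*} [LinearOrder ι] [Finite ι] {v : ι → β}
    (hv : ¬ Function.Injective v) : ∃ i i', i < i' ∧ v i' = v i ∧ ∀ j < i, v j ≠ v i := by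
  have h_ex : ∃ i i', i < i' ∧ v i' = v i := by
    obtain ⟨p, q, hpq, hne⟩ : ∃ p q, v p = v q ∧ p ≠ q := by
      simpa [Function.Injective] using hv
    rcases hne.lt_or_gt with h | h
    exacts [⟨p, q, h, hpq.symm⟩, ⟨q, p, h, hpq⟩]
  obtain ⟨i, hi⟩ := (Set.toFinite {i | ∃ i', i < i' ∧ v i' = v i}).exists_minimal h_ex
  obtain ⟨i', hii', heq⟩ := hi.1
  exact ⟨i, i', hii', heq, fun j hj hji => hi.not_lt ⟨i, hj, hji.symm⟩ hj⟩

lemma isOpen_setOf_strictMono {ι α : Type*} [Finite ι] [Preorder ι] [TopologicalSpace α]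
    [LinearOrder α] [OrderClosedTopology α] : IsOpen {x : ι → α | StrictMono x} := by
  simp only [StrictMono, Set.ofPred_forall]
  exact isOpen_iInter_of_finite fun i => isOpen_iInter_of_finite fun j =>
    isOpen_iInter_of_finite fun _ => isOpen_lt (continuous_apply i) (continuous_apply j)

theorem stmt_13_general (n : ℕ) (a b c : ℝ) (ha : 0 < a) (hb : 0 < b) (hc : 0 < c)
    (f : Fin n → (Fin n → ℝ) → ℝ)
    (hf : ∀ i x, f i x = a / (1 - x i) - b / x i - ∑ j ∈ univ.erase i, c / (x i - x j))
    (U : Set (Fin n → ℝ))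
    (hU : U = {x : Fin n → ℝ | (∀ i, 0 < x i ∧ x i < 1) ∧ StrictMono x})
    (v : Fin n → ℝ) (hv : v ∈ frontier U)
    (u : ℕ → (Fin n → ℝ)) (hu : ∀ k, u k ∈ U)
    (hlim : Tendsto u atTop (nhds v)) :
    ∃ i : Fin n, Tendsto (fun k => |f i (u k)|) atTop atTop := by
  have hU_open : IsOpen U := by
    rw [hU, Set.ofPred_and, Set.ofPred_forall]
    exact (isOpen_iInter_of_finite fun i => isOpen_Ioo.preimage (continuous_apply i)).inter
      isOpen_setOf_strictMono
  have hvU : v ∉ U := fun h => hv.2 (by rwa [hU_open.interior_eq])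
  subst hU
  obtain rfl : f = fun i x => force a b c x i := funext fun i => funext (hf i)
  have hcoord := tendsto_pi_nhds.1 hlim
  have hv0 (i : Fin n) : 0 ≤ v i := ge_of_tendsto' (hcoord i) fun k => ((hu k).1 i).1.le
  have hv1 (i : Fin n) : v i ≤ 1 := le_of_tendsto' (hcoord i) fun k => ((hu k).1 i).2.le
  have hmono : Monotone v := fun i j hij =>
    le_of_tendsto_of_tendsto' (hcoord i) (hcoord j) fun k => (hu k).2.monotone hij
  suffices ∃ i, Tendsto (fun k => force a b c (u k) i) atTop atBot ∨
      Tendsto (fun k => force a b c (u k) i) atTop atTop by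
    obtain ⟨i, h | h⟩ := this
    exacts [⟨i, tendsto_abs_atBot_atTop.comp h⟩, ⟨i, tendsto_abs_atTop_atTop.comp h⟩]
  by_cases h0 : ∃ i, v i = 0
  · obtain ⟨i, hi⟩ := (Set.toFinite _).exists_maximal h0
    exact ⟨i, .inl <| tendsto_force_atBot_of_maximal_zero hb hc.le (fun k j => ((hu k).1 j).1)
      (fun k => (hu k).2) hlim hi⟩
  by_cases h1 : ∃ i, v i = 1
  · obtain ⟨i, hi⟩ := (Set.toFinite _).exists_minimal h1
    exact ⟨i, .inr <| tendsto_force_atTop_of_minimal_one ha hc.le (fun k j => ((hu k).1 j).2)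
      (fun k => (hu k).2) hlim hi⟩
  push Not at h0 h1
  have hv_noninj : ¬ Function.Injective v := fun hinj => hvU
    ⟨fun i => ⟨(hv0 i).lt_of_ne' (h0 i), (hv1 i).lt_of_ne (h1 i)⟩, hmono.strictMono_of_injective hinj⟩
  obtain ⟨i, i', hii', heq, hlt⟩ := exists_lt_eq_forall_lt_ne hv_noninj
  exact ⟨i, .inr <| tendsto_force_atTop_of_collision hc (fun k => (hu k).2) hlim (h0 i) (h1 i)
    hii' heq hlt⟩

theorem stmt_13 (n : ℕ) (hn : 1 ≤ n) (a b c : ℝ) (ha : 0 < a) (hb : 0 < b) (hc : 0 < c)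
    (f : Fin n → (Fin n → ℝ) → ℝ)
    (hf : ∀ i x, f i x = a / (1 - x i) - b / x i - ∑ j ∈ univ.erase i, c / (x i - x j))
    (U : Set (Fin n → ℝ))
    (hU : U = {x : Fin n → ℝ | (∀ i, 0 < x i ∧ x i < 1) ∧ StrictMono x})
    (v : Fin n → ℝ) (hv : v ∈ frontier U)
    (u : ℕ → (Fin n → ℝ)) (hu : ∀ k, u k ∈ U)
    (hlim : Tendsto u atTop (nhds v)) :
    ∃ i : Fin n, Tendsto (fun k => |f i (u k)|) atTop atTop :=
  stmt_13_general n a b c ha hb hc f hf U hU v hv u hu hlim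
end

section
/- Let h be meromorphic near w ∈ ℂ and holomorphic at w, and J holomorphic near w with J'(w) ≠ 0. Then the residue at w of f(z) = h(z)/(J(z)-J(w))² equals h'(w)/J'(w)² - h(w)J''(w)/J'(w)³. -/
open Filter Topology

/-
With `k = dslope J w` we have `J z - J w = (z - w) k(z)`, where `k` is analytic and
`k(w) = J'(w) ≠ 0`. Hence `f = F / (z - w)²` with `F = h / k²` analytic at `w`, and the
second-order Taylor expansion of `F` gives the principal part `F(w)/(z - w)² + F'(w)/(z - w)`.
Finally `J'' (w) = 2 k'(w)`, so `F'(w) = h'(w)/J'(w)² - h(w) J''(w)/J'(w)³`.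
-/

section

variable {𝕜 E : Type*} [NontriviallyNormedField 𝕜] [NormedAddCommGroup E] [NormedSpace 𝕜 E]
  {f : 𝕜 → E} {a : 𝕜}

theorem analyticAt_dslope (hf : AnalyticAt 𝕜 f a) : AnalyticAt 𝕜 (dslope f a) a :=
  let ⟨_, hp⟩ := hf
  ⟨_, hp.has_fpower_series_dslope_fslope⟩

theorem eq_add_sub_smul_deriv_add_sq_smul_dslope_dslope (f : 𝕜 → E) (a z : 𝕜) :
    f z = f a + (z - a) • deriv f a + (z - a) ^ 2 • dslope (dslope f a) a z := by
  have h₁ := sub_smul_dslope f a z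
  have h₂ := sub_smul_dslope (dslope f a) a z
  rw [dslope_same] at h₂
  rw [sq, mul_smul, h₂, smul_sub, h₁]
  abel

theorem deriv_deriv_eq_two_smul_deriv_dslope [CompleteSpace E] (hf : AnalyticAt 𝕜 f a) :
    deriv (deriv f) a = (2 : 𝕜) • deriv (dslope f a) a := by
  set k := dslope f a
  have hk : AnalyticAt 𝕜 k a := analyticAt_dslope hf
  have hf_eq : f = fun z => f a + (z - a) • k z := funext fun z => by simp [k, sub_smul_dslope]
  have hderiv : deriv f =ᶠ[𝓝 a] fun z => (z - a) • deriv k z + k z := by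
    filter_upwards [hk.eventually_analyticAt] with z hz
    have hf_deriv := (((hasDerivAt_id' z).sub_const a).fun_smul
      hz.differentiableAt.hasDerivAt).const_add (f a)
    rw [hf_eq, hf_deriv.deriv, one_smul]
  have hf_deriv₂ := (((hasDerivAt_id' a).sub_const a).fun_smul
    hk.deriv.differentiableAt.hasDerivAt).fun_add hk.differentiableAt.hasDerivAt
  rw [hderiv.deriv_eq, hf_deriv₂.deriv, sub_self, zero_smul, zero_add, one_smul, two_smul]

end

section

variable {𝕜 : Type*} [NontriviallyNormedField 𝕜] {a : 𝕜}

theorem AnalyticAt.exists_div_sub_sq_eq {F : 𝕜 → 𝕜} (hF : AnalyticAt 𝕜 F a) :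
    ∃ g : 𝕜 → 𝕜, AnalyticAt 𝕜 g a ∧
      ∀ z ≠ a, F z / (z - a) ^ 2 = F a / (z - a) ^ 2 + deriv F a / (z - a) + g z := by
  refine ⟨dslope (dslope F a) a, analyticAt_dslope (analyticAt_dslope hF), fun z hz => ?_⟩
  have hza : z - a ≠ 0 := sub_ne_zero.mpr hz
  rw [eq_add_sub_smul_deriv_add_sq_smul_dslope_dslope F a z, smul_eq_mul, smul_eq_mul]
  field_simp

theorem deriv_div_dslope_sq [CompleteSpace 𝕜] {h J : 𝕜 → 𝕜} (hh : AnalyticAt 𝕜 h a)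
    (hJ : AnalyticAt 𝕜 J a) (hJ' : deriv J a ≠ 0) :
    deriv (fun z => h z / dslope J a z ^ 2) a =
      deriv h a / deriv J a ^ 2 - h a * deriv (deriv J) a / deriv J a ^ 3 := by
  have hk : AnalyticAt 𝕜 (dslope J a) a := analyticAt_dslope hJ
  have hka : dslope J a a ≠ 0 := by rwa [dslope_same]
  have hF_deriv := hh.differentiableAt.hasDerivAt.fun_div
    (hk.differentiableAt.hasDerivAt.fun_pow 2) (pow_ne_zero 2 hka)
  rw [hF_deriv.deriv, deriv_deriv_eq_two_smul_deriv_dslope hJ, dslope_same, smul_eq_mul]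
  field_simp
  ring

end

/-- The residue of `f(z) = h(z)/(J(z) - J(w))²` at `w` (a pole of order at most 2)
equals `h'(w)/J'(w)² - h(w)J''(w)/J'(w)³`, expressed via the principal part:
`f` minus its principal part extends analytically across `w`. -/
theorem stmt_17 (h J : ℂ → ℂ) (w : ℂ)
    (hh : AnalyticAt ℂ h w) (hJ : AnalyticAt ℂ J w)
    (hJ' : deriv J w ≠ 0) :
    ∃ g : ℂ → ℂ, AnalyticAt ℂ g w ∧
      ∀ᶠ z in nhdsWithin w {w}ᶜ,
        h z / (J z - J w) ^ 2 =
          (h w / (deriv J w) ^ 2) / (z - w) ^ 2 +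
          (deriv h w / (deriv J w) ^ 2
            - h w * deriv (deriv J) w / (deriv J w) ^ 3) / (z - w) + g z := by
  have hk : dslope J w w ≠ 0 := by rwa [dslope_same]
  obtain ⟨g, hg, hexp⟩ :=
    (hh.fun_div ((analyticAt_dslope hJ).fun_pow 2) (pow_ne_zero 2 hk)).exists_div_sub_sq_eq
  refine ⟨g, hg, ?_⟩
  filter_upwards [self_mem_nhdsWithin] with z hz
  calc h z / (J z - J w) ^ 2 = h z / dslope J w z ^ 2 / (z - w) ^ 2 := by
        rw [← sub_smul_dslope, smul_eq_mul, mul_pow, div_div, mul_comm ((z - w) ^ 2)]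
    _ = _ := by
        rw [hexp z hz, deriv_div_dslope_sq hh hJ hJ']
        simp only [dslope_same]
end
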